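/- For r ≥ 1, lim_{z → r e^{iπ/m}, z ∈ S_m} I_{m,S,b}(z) = (1/m)·e^{-iaπ/m} ∫_0^{1/r^m} (1-u)^{b/m} u^{c/m} du, where a = S - b and c = S - m - b. -/

import Mathlib

/-!
For `z` in `S_m` close to `z₀ = r e^{iπ/m}` the power `z^m` lies in the closed upper half-plane,
and so does `1 + (tz)^m`. The principal branch of `w ↦ w^{b/m}` is continuous from the closed
upper half-plane up to the negative real axis, so `abelI` is continuous at `z₀` within `S_m`
(dominated convergence with the bound `t^{b-S-1}`). At `z₀` itself `1 + (tz₀)^m = 1 - (tr)^m < 0`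
for `t > 1`, so the integrand is `e^{iπb/m} ((tr)^m - 1)^{b/m} / t^{S+1}`; the substitution
`u = (tr)^{-m}` turns its integral into `(r^S/m) ∫_0^{1/r^m} (1-u)^{b/m} u^{c/m} du`, and the phase
combines with `z₀^{-S} = r^{-S} e^{-iπS/m}` to `e^{-iπa/m}`.
-/
open Complex MeasureTheory Filter

/-- The Abelian integral `I_{m,S,b}(z) = (1/z^S) ∫_1^∞ (1+(tz)^m)^{b/m} dt/t^{S+1}`,
i.e. `∫_{[z,z∞)} (1+u^m)^{b/m} du/u^{S+1}` (principal branch). -/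
noncomputable def abelI (m S b : ℕ) (z : ℂ) : ℂ :=
    z ^ (-(S : ℤ)) *
      ∫ t in Set.Ioi (1 : ℝ), (1 + ((t : ℂ) * z) ^ m) ^ ((b : ℂ) / m) / (t : ℂ) ^ (S + 1)

/-- The open sector `S_m = {z ≠ 0 : -π/m < arg z < π/m}`. -/
def sectorSm (m : ℕ) : Set ℂ :=
    {z : ℂ | z ≠ 0 ∧ -(Real.pi / m) < z.arg ∧ z.arg < Real.pi / m}

open Topology Set

namespace Complex

lemma continuousWithinAt_cpow_const_of_re_neg_of_im_zero {x : ℂ} (hre : x.re < 0)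
    (him : x.im = 0) (s : ℂ) : ContinuousWithinAt (· ^ s) {w : ℂ | 0 ≤ w.im} x := by
  have hx : x ≠ 0 := fun h => by simp [h] at hre
  have hexp : ContinuousWithinAt (fun w => exp (log w * s)) {w : ℂ | 0 ≤ w.im} x :=
    continuous_exp.continuousAt.comp_continuousWithinAt
      ((continuousWithinAt_log_of_re_neg_of_im_zero hre him).mul continuousWithinAt_const)
  refine hexp.congr_of_eventuallyEq ?_ (cpow_def_of_ne_zero hx s)
  filter_upwards [nhdsWithin_le_nhds (isOpen_ne.mem_nhds hx)] with w hw
  exact cpow_def_of_ne_zero hw s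

lemma im_pow_eq_norm_pow_mul_sin (z : ℂ) (n : ℕ) :
    (z ^ n).im = ‖z‖ ^ n * Real.sin (n * z.arg) := by
  conv_lhs => rw [← norm_mul_exp_arg_mul_I z]
  rw [mul_pow, ← exp_nat_mul, ← ofReal_pow, im_ofReal_mul,
    show (n : ℂ) * (z.arg * I) = ((n * z.arg : ℝ) : ℂ) * I by push_cast; ring, exp_ofReal_mul_I_im]

end Complex

lemma im_pow_nonneg_of_mem_sectorSm {m : ℕ} {z : ℂ} (hz : z ∈ sectorSm m) (him : 0 ≤ z.im) :
    0 ≤ (z ^ m).im := by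
  rw [Complex.im_pow_eq_norm_pow_mul_sin]
  refine mul_nonneg (by positivity) (Real.sin_nonneg_of_nonneg_of_le_pi ?_ ?_)
  · exact mul_nonneg m.cast_nonneg (Complex.arg_nonneg_iff.2 him)
  · rcases m.eq_zero_or_pos with rfl | hm
    · simp [Real.pi_pos.le]
    · have := hz.2.2
      rw [lt_div_iff₀ (by exact_mod_cast hm)] at this
      linarith

lemma setOf_im_pow_nonneg_mem_nhdsWithin_sectorSm {m : ℕ} {z₀ : ℂ} (hz₀ : 0 < z₀.im) :
    {z : ℂ | 0 ≤ (z ^ m).im} ∈ 𝓝[sectorSm m] z₀ := by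
  have him : ∀ᶠ z in 𝓝 z₀, 0 < z.im :=
    Complex.continuous_im.continuousAt.eventually (eventually_gt_nhds hz₀)
  filter_upwards [self_mem_nhdsWithin, nhdsWithin_le_nhds him] with z hz hzim
  exact im_pow_nonneg_of_mem_sectorSm hz hzim.le

noncomputable def abelIntegrand (m S b : ℕ) (z : ℂ) (t : ℝ) : ℂ :=
  (1 + ((t : ℂ) * z) ^ m) ^ ((b : ℂ) / m) / (t : ℂ) ^ (S + 1)

lemma abelI_eq_zpow_mul_integral (m S b : ℕ) (z : ℂ) :
    abelI m S b z = z ^ (-(S : ℤ)) * ∫ t in Ioi (1 : ℝ), abelIntegrand m S b z t := rfl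

lemma one_add_mul_pow_im (m : ℕ) (t : ℝ) (z : ℂ) :
    (1 + ((t : ℂ) * z) ^ m).im = t ^ m * (z ^ m).im := by
  rw [mul_pow, ← Complex.ofReal_pow, Complex.add_im, Complex.one_im, zero_add,
    Complex.im_ofReal_mul]

lemma pow_rpow_natCast_div {m : ℕ} (hm : m ≠ 0) (k : ℕ) {x : ℝ} (hx : 0 ≤ x) :
    (x ^ m) ^ ((k : ℝ) / m) = x ^ k := by
  rw [← Real.rpow_natCast x m, ← Real.rpow_mul hx, mul_div_cancel₀ _ (by exact_mod_cast hm),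
    Real.rpow_natCast]

lemma norm_abelIntegrand_le {m : ℕ} (hm : m ≠ 0) (S b : ℕ) {z : ℂ} {R t : ℝ} (hz : ‖z‖ ≤ R)
    (ht : 1 ≤ t) :
    ‖abelIntegrand m S b z t‖ ≤ (1 + R ^ m) ^ ((b : ℝ) / m) * t ^ ((b : ℝ) - (S + 1)) := by
  have ht0 : 0 < t := zero_lt_one.trans_le ht
  have hR : 0 ≤ R := (norm_nonneg z).trans hz
  have hbase : ‖1 + ((t : ℂ) * z) ^ m‖ ≤ (1 + R ^ m) * t ^ m :=
    calc ‖1 + ((t : ℂ) * z) ^ m‖ ≤ 1 + (t * ‖z‖) ^ m := by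
          simpa [norm_mul, abs_of_pos ht0] using norm_add_le (1 : ℂ) (((t : ℂ) * z) ^ m)
      _ ≤ 1 + (t * R) ^ m := by gcongr
      _ ≤ (1 + R ^ m) * t ^ m := by
          rw [mul_pow]; nlinarith [one_le_pow₀ (n := m) ht, pow_nonneg hR m]
  have hexp : ((1 + R ^ m) * t ^ m) ^ ((b : ℝ) / m) = (1 + R ^ m) ^ ((b : ℝ) / m) * t ^ b := by
    rw [Real.mul_rpow (by positivity) (by positivity), pow_rpow_natCast_div hm b ht0.le]
  have hpow : t ^ ((b : ℝ) - (S + 1)) = t ^ b / t ^ (S + 1) := by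
    rw [Real.rpow_sub ht0, Real.rpow_natCast, ← Nat.cast_succ, Real.rpow_natCast]
  rw [abelIntegrand, norm_div, norm_pow, Complex.norm_real, Real.norm_of_nonneg ht0.le,
    show (b : ℂ) / m = ((b / m : ℝ) : ℂ) by push_cast; rfl, Complex.norm_cpow_real, hpow,
    ← mul_div_assoc, ← hexp]
  gcongr

lemma one_add_mul_pow_of_pow_eq_neg {m : ℕ} {r t : ℝ} {z₀ : ℂ} (hz₀ : z₀ ^ m = -(r : ℂ) ^ m) :
    1 + ((t : ℂ) * z₀) ^ m = ((1 - (t * r) ^ m : ℝ) : ℂ) := by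
  rw [mul_pow, hz₀]; push_cast; ring

lemma continuousWithinAt_abelIntegrand {m : ℕ} (hm : m ≠ 0) (S b : ℕ) {r t : ℝ} (hr : 1 ≤ r)
    (ht : 1 < t) {z₀ : ℂ} (hz₀ : z₀ ^ m = -(r : ℂ) ^ m) :
    ContinuousWithinAt (abelIntegrand m S b · t) {z : ℂ | 0 ≤ (z ^ m).im} z₀ := by
  have hval := one_add_mul_pow_of_pow_eq_neg (t := t) hz₀
  have hneg : (1 : ℝ) - (t * r) ^ m < 0 := by linarith [one_lt_pow₀ (by nlinarith : 1 < t * r) hm]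
  have hcpow := Complex.continuousWithinAt_cpow_const_of_re_neg_of_im_zero
    (x := 1 + ((t : ℂ) * z₀) ^ m) (by rw [hval, Complex.ofReal_re]; exact hneg)
    (by rw [hval, Complex.ofReal_im]) ((b : ℂ) / m)
  have hmaps : MapsTo (fun z : ℂ => 1 + ((t : ℂ) * z) ^ m) {z : ℂ | 0 ≤ (z ^ m).im}
      {w : ℂ | 0 ≤ w.im} := by
    intro z hz
    simp only [mem_ofPred_eq, one_add_mul_pow_im]
    exact mul_nonneg (by positivity) hz
  have hinner : ContinuousWithinAt (fun z : ℂ => 1 + ((t : ℂ) * z) ^ m)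
      {z : ℂ | 0 ≤ (z ^ m).im} z₀ := by fun_prop
  exact (ContinuousWithinAt.comp (f := fun z : ℂ => 1 + ((t : ℂ) * z) ^ m) hcpow hinner
    hmaps).div_const _

lemma continuousWithinAt_abelI {m S b : ℕ} (hm : m ≠ 0) (hbS : b < S) {r : ℝ} (hr : 1 ≤ r)
    {z₀ : ℂ} (hz₀ : z₀ ^ m = -(r : ℂ) ^ m) :
    ContinuousWithinAt (abelI m S b) {z : ℂ | 0 ≤ (z ^ m).im} z₀ := by
  have hz₀ne : z₀ ≠ 0 := by
    rintro rfl
    simp [zero_pow hm, (zero_lt_one.trans_le hr).ne'] at hz₀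
  have hbound : IntegrableOn (fun t : ℝ => (1 + (‖z₀‖ + 1) ^ m) ^ ((b : ℝ) / m) *
      t ^ ((b : ℝ) - (S + 1))) (Ioi 1) :=
    (integrableOn_Ioi_rpow_of_lt (by linarith [(Nat.cast_lt (α := ℝ)).2 hbS]) one_pos).const_mul _
  have hnorm : ∀ᶠ z in 𝓝[{z : ℂ | 0 ≤ (z ^ m).im}] z₀, ‖z‖ ≤ ‖z₀‖ + 1 :=
    nhdsWithin_le_nhds <| continuous_norm.continuousAt.eventually (eventually_le_nhds (by linarith))
  have hintegral : ContinuousWithinAt (fun z => ∫ t in Ioi (1 : ℝ), abelIntegrand m S b z t)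
      {z : ℂ | 0 ≤ (z ^ m).im} z₀ := by
    refine continuousWithinAt_of_dominated (Eventually.of_forall fun z => ?_) ?_ hbound ?_
    · unfold abelIntegrand
      exact (by fun_prop : Measurable _).aestronglyMeasurable
    · filter_upwards [hnorm] with z hz
      filter_upwards [ae_restrict_mem measurableSet_Ioi] with t ht
      exact norm_abelIntegrand_le hm S b hz (le_of_lt ht)
    · filter_upwards [ae_restrict_mem measurableSet_Ioi] with t ht
      exact continuousWithinAt_abelIntegrand hm S b hr ht hz₀
  exact ((continuousAt_zpow₀ z₀ _ (Or.inl hz₀ne)).continuousWithinAt).mul hintegral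

lemma image_inv_pow_Ioi {m : ℕ} (hm : m ≠ 0) {r : ℝ} (hr : 0 < r) :
    (fun x : ℝ => (x ^ m)⁻¹) '' Ioi r = Ioo 0 (r ^ m)⁻¹ := by
  ext u
  constructor
  · rintro ⟨x, hx, rfl⟩
    have hx0 : 0 < x := hr.trans hx
    exact ⟨by positivity, inv_strictAnti₀ (by positivity) (pow_lt_pow_left₀ hx hr.le hm)⟩
  · rintro ⟨hu0, hur⟩
    have hlt : r ^ m < u⁻¹ := (lt_inv_comm₀ hu0 (by positivity)).1 hur
    refine ⟨u⁻¹ ^ (m : ℝ)⁻¹, ?_, ?_⟩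
    · calc r = (r ^ m) ^ (m : ℝ)⁻¹ := (Real.pow_rpow_inv_natCast hr.le hm).symm
        _ < u⁻¹ ^ (m : ℝ)⁻¹ := Real.rpow_lt_rpow (by positivity) hlt (by positivity)
    · simp only [Real.rpow_inv_natCast_pow (inv_nonneg.2 hu0.le) hm, inv_inv]

lemma integral_Ioo_zero_inv_pow {E : Type*} [NormedAddCommGroup E] [NormedSpace ℝ E]
    {m : ℕ} (hm : m ≠ 0) {r : ℝ} (hr : 0 < r) (g : ℝ → E) :
    ∫ u in Ioo 0 (r ^ m)⁻¹, g u = ∫ x in Ioi r, (m / x ^ (m + 1)) • g (x ^ m)⁻¹ := by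
  have hderiv : ∀ x ∈ Ioi r, HasDerivWithinAt (fun x : ℝ => (x ^ m)⁻¹)
      (-(m / x ^ (m + 1))) (Ioi r) x := by
    intro x hx
    have hx0 : x ≠ 0 := (hr.trans hx).ne'
    refine ((hasDerivAt_pow m x).inv (pow_ne_zero m hx0)).hasDerivWithinAt.congr_deriv ?_
    have hsq : (x ^ m) ^ 2 = x ^ (m - 1) * x ^ (m + 1) := by
      rw [← pow_mul, ← pow_add]; congr 1; omega
    rw [hsq]
    field_simp
  have hinj : InjOn (fun x : ℝ => (x ^ m)⁻¹) (Ioi r) := fun x hx y hy hxy =>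
    (pow_left_strictMonoOn₀ hm).injOn (hr.trans hx).le (hr.trans hy).le (inv_injective hxy)
  rw [← image_inv_pow_Ioi hm hr, integral_image_eq_integral_abs_deriv_smul measurableSet_Ioi
    hderiv hinj]
  refine setIntegral_congr_fun measurableSet_Ioi fun x hx => ?_
  rw [abs_neg, abs_of_pos (by have := hr.trans hx; positivity)]

lemma one_sub_inv_pow_rpow_mul_inv_pow_rpow {m : ℕ} (hm : m ≠ 0) (b c : ℕ) {x : ℝ} (hx : 1 ≤ x) :
    (1 - (x ^ m)⁻¹) ^ ((b : ℝ) / m) * ((x ^ m)⁻¹) ^ ((c : ℝ) / m) =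
      (x ^ m - 1) ^ ((b : ℝ) / m) / x ^ (b + c) := by
  have hx0 : 0 < x := zero_lt_one.trans_le hx
  have hsub : 1 - (x ^ m)⁻¹ = (x ^ m - 1) / x ^ m := by field_simp
  rw [hsub, Real.div_rpow (by linarith [one_le_pow₀ (n := m) hx]) (by positivity),
    Real.inv_rpow (by positivity), pow_rpow_natCast_div hm b hx0.le,
    pow_rpow_natCast_div hm c hx0.le, pow_add]
  field_simp

lemma intervalIntegral_one_sub_rpow_mul_rpow {m S b c : ℕ} (hm : m ≠ 0) (hc : c + m + b = S)
    {r : ℝ} (hr : 1 ≤ r) :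
    ∫ u in (0 : ℝ)..1 / r ^ m, (1 - u) ^ ((b : ℝ) / m) * u ^ ((c : ℝ) / m) =
      m / r ^ S * ∫ t in Ioi (1 : ℝ), ((t * r) ^ m - 1) ^ ((b : ℝ) / m) / t ^ (S + 1) := by
  have hr0 : 0 < r := zero_lt_one.trans_le hr
  set h : ℝ → ℝ := fun x => (x ^ m - 1) ^ ((b : ℝ) / m) / x ^ (S + 1)
  have hsubst : ∫ x in Ioi r, (m / x ^ (m + 1)) •
      ((1 - (x ^ m)⁻¹) ^ ((b : ℝ) / m) * ((x ^ m)⁻¹) ^ ((c : ℝ) / m)) = m * ∫ x in Ioi r, h x := by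
    rw [← integral_const_mul]
    refine setIntegral_congr_fun measurableSet_Ioi fun x hx => ?_
    have hx1 : 1 ≤ x := hr.trans (le_of_lt hx)
    have hx0 : x ≠ 0 := (zero_lt_one.trans_le hx1).ne'
    simp only [h, smul_eq_mul, one_sub_inv_pow_rpow_mul_inv_pow_rpow hm b c hx1, ← hc]
    field_simp
    ring
  have hscale : ∫ t in Ioi (1 : ℝ), ((t * r) ^ m - 1) ^ ((b : ℝ) / m) / t ^ (S + 1) =
      r ^ S * ∫ x in Ioi r, h x := by
    calc ∫ t in Ioi (1 : ℝ), ((t * r) ^ m - 1) ^ ((b : ℝ) / m) / t ^ (S + 1)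
        = ∫ t in Ioi (1 : ℝ), r ^ (S + 1) * h (t * r) := by
          refine integral_congr_ae (ae_of_all _ fun t => ?_)
          simp only [h, mul_pow]
          field_simp
      _ = r ^ (S + 1) * (r⁻¹ • ∫ x in Ioi (1 * r), h x) := by
          rw [integral_const_mul, integral_comp_mul_right_Ioi h 1 hr0]
      _ = r ^ S * ∫ x in Ioi r, h x := by
          rw [one_mul, smul_eq_mul, pow_succ]
          field_simp
  rw [intervalIntegral.integral_of_le (by positivity), integral_Ioc_eq_integral_Ioo, one_div,
    integral_Ioo_zero_inv_pow hm hr0, hsubst, hscale]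
  field_simp

lemma integral_abelIntegrand_of_pow_eq_neg {m : ℕ} (S b : ℕ) {r : ℝ} (hr : 1 ≤ r)
    {z₀ : ℂ} (hz₀ : z₀ ^ m = -(r : ℂ) ^ m) :
    ∫ t in Ioi (1 : ℝ), abelIntegrand m S b z₀ t =
      Complex.exp (Real.pi * Complex.I * (b / m)) *
        ((∫ t in Ioi (1 : ℝ), ((t * r) ^ m - 1) ^ ((b : ℝ) / m) / t ^ (S + 1) : ℝ) : ℂ) := by
  rw [← integral_complex_ofReal, ← integral_const_mul]
  refine setIntegral_congr_fun measurableSet_Ioi fun t ht => ?_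
  have hpos : 0 ≤ (t * r) ^ m - 1 := by
    nlinarith [one_le_pow₀ (n := m) (one_le_mul_of_one_le_of_one_le (le_of_lt ht) hr)]
  rw [abelIntegrand, one_add_mul_pow_of_pow_eq_neg hz₀, Complex.ofReal_cpow_of_nonpos (by linarith),
    ← Complex.ofReal_neg, neg_sub, Complex.ofReal_div, Complex.ofReal_pow,
    Complex.ofReal_cpow hpos]
  push_cast
  ring

lemma ofReal_mul_exp_pi_div_mul_I_pow {m : ℕ} (hm : m ≠ 0) (r : ℝ) :
    ((r : ℂ) * Complex.exp (Real.pi / m * Complex.I)) ^ m = -(r : ℂ) ^ m := by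
  have hm' : (m : ℂ) ≠ 0 := by exact_mod_cast hm
  rw [mul_pow, ← Complex.exp_nat_mul, show (m : ℂ) * (Real.pi / m * Complex.I) = Real.pi * Complex.I
    by field_simp, Complex.exp_pi_mul_I]
  ring

lemma ofReal_mul_exp_pi_div_mul_I_zpow (m S : ℕ) (r : ℝ) :
    ((r : ℂ) * Complex.exp (Real.pi / m * Complex.I)) ^ (-(S : ℤ)) =
      ((r ^ S)⁻¹ : ℝ) * Complex.exp (-(S * Real.pi / m) * Complex.I) := by
  rw [mul_zpow, zpow_neg, zpow_natCast, ← Complex.exp_int_mul]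
  push_cast
  ring_nf

lemma ofReal_mul_exp_pi_div_mul_I_im_pos {m : ℕ} (hm : 2 ≤ m) {r : ℝ} (hr : 0 < r) :
    0 < ((r : ℂ) * Complex.exp (Real.pi / m * Complex.I)).im := by
  have hm0 : (0 : ℝ) < m := by positivity
  rw [show (Real.pi / m : ℂ) = ((Real.pi / m : ℝ) : ℂ) by push_cast; rfl, Complex.im_ofReal_mul,
    Complex.exp_ofReal_mul_I_im]
  refine mul_pos hr (Real.sin_pos_of_pos_of_lt_pi (by positivity) ?_)
  rw [div_lt_iff₀ hm0]
  nlinarith [Real.pi_pos, (show (2 : ℝ) ≤ m by exact_mod_cast hm)]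

lemma abelI_ofReal_mul_exp_pi_div_mul_I {m S b a c : ℕ} (hm : m ≠ 0) (ha : a + b = S)
    (hc : c + m + b = S) {r : ℝ} (hr : 1 ≤ r) :
    abelI m S b ((r : ℂ) * Complex.exp (Real.pi / m * Complex.I)) =
      1 / (m : ℂ) * Complex.exp (-((a : ℂ) * Real.pi / m) * Complex.I) *
        ((∫ u in (0 : ℝ)..1 / r ^ m, (1 - u) ^ ((b : ℝ) / m) * u ^ ((c : ℝ) / m) : ℝ) : ℂ) := by
  have hexp : Complex.exp (-(S * Real.pi / m) * Complex.I) *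
      Complex.exp (Real.pi * Complex.I * (b / m)) =
        Complex.exp (-((a : ℂ) * Real.pi / m) * Complex.I) := by
    rw [← Complex.exp_add, ← ha]
    push_cast
    ring_nf
  have hr0 : (r : ℂ) ≠ 0 := by exact_mod_cast (zero_lt_one.trans_le hr).ne'
  have hm' : (m : ℂ) ≠ 0 := by exact_mod_cast hm
  rw [abelI_eq_zpow_mul_integral, ofReal_mul_exp_pi_div_mul_I_zpow,
    integral_abelIntegrand_of_pow_eq_neg S b hr (ofReal_mul_exp_pi_div_mul_I_pow hm r),
    intervalIntegral_one_sub_rpow_mul_rpow hm hc hr, ← hexp]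
  generalize ∫ t in Ioi (1 : ℝ), ((t * r) ^ m - 1) ^ ((b : ℝ) / m) / t ^ (S + 1) = J
  push_cast
  field_simp

theorem stmt13_general (m S b a c : ℕ) (hlarge : S < 2 * m) (hmS : m < S)
    (ha : a + b = S) (hc : c + m + b = S)
    (r : ℝ) (hr : 1 ≤ r) :
    Tendsto (abelI m S b)
      (nhdsWithin ((r : ℂ) * Complex.exp (Real.pi / m * Complex.I)) (sectorSm m))
      (nhds
        ((1 / (m : ℂ)) * Complex.exp (-((a : ℂ) * Real.pi / m) * Complex.I) *
          ((∫ u in (0 : ℝ)..(1 / r ^ m),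
              (1 - u) ^ ((b : ℝ) / m) * u ^ ((c : ℝ) / m) : ℝ) : ℂ))) := by
  have hm : 2 ≤ m := by omega
  have hcont := continuousWithinAt_abelI (m := m) (S := S) (b := b) (by omega) (by omega) hr
    (ofReal_mul_exp_pi_div_mul_I_pow (by omega) r)
  rw [← abelI_ofReal_mul_exp_pi_div_mul_I (by omega) ha hc hr]
  exact (hcont.mono_of_mem_nhdsWithin (setOf_im_pow_nonneg_mem_nhdsWithin_sectorSm
    (ofReal_mul_exp_pi_div_mul_I_im_pos hm (zero_lt_one.trans_le hr)))).tendsto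

/-- For `r ≥ 1`, as `z → r·e^{iπ/m}` within `S_m`, `I_{m,S,b}(z)` tends to
`(1/m)·e^{-iaπ/m} ∫_0^{1/r^m} (1-u)^{b/m} u^{c/m} du`, with `a = S-b`, `c = S-m-b`. -/
theorem stmt13 (m S b a c : ℕ) (hS : 5 ≤ S) (hlarge : S < 2 * m) (hmS : m < S)
    (hb1 : 1 ≤ b) (hbc : b ≤ S - m - 1) (ha : a + b = S) (hc : c + m + b = S)
    (r : ℝ) (hr : 1 ≤ r) :
    Tendsto (abelI m S b)
      (nhdsWithin ((r : ℂ) * Complex.exp (Real.pi / m * Complex.I)) (sectorSm m))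
      (nhds
        ((1 / (m : ℂ)) * Complex.exp (-((a : ℂ) * Real.pi / m) * Complex.I) *
          ((∫ u in (0 : ℝ)..(1 / r ^ m),
              (1 - u) ^ ((b : ℝ) / m) * u ^ ((c : ℝ) / m) : ℝ) : ℂ))) :=
  stmt13_general m S b a c hlarge hmS ha hc r hr
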